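/- Assume t_L < 0 < t_R and a_R/t_R > a_L/t_L. Then the system of equations t_L·x⁻ = t_R·x⁺ and (d_L·x⁻ − a_L)/t_L = (d_R·x⁺ − a_R)/t_R has a solution (x⁻, x⁺) with x⁻ < 0 < x⁺ if and only if d_R/t_R² > d_L/t_L². Moreover, when d_R/t_R² > d_L/t_L², the solution with x⁻ < 0 < x⁺ is unique. -/

import Mathlib

/-!
Eliminating `x⁻ = t_R x⁺ / t_L`, the second equation becomes
`t_R x⁺ (d_R/t_R² - d_L/t_L²) = a_R/t_R - a_L/t_L`, and `x⁻ < 0` holds iff `x⁺ > 0`.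
Since the right-hand side is positive, a positive solution `x⁺` exists iff the coefficient
`d_R/t_R² - d_L/t_L²` is positive, and then `x⁺` is determined by this linear equation.
-/

variable {tR tL dR dL aR aL xm xp : ℝ}

lemma system_iff_eq_div_and_mul_eq (hL : tL ≠ 0) (hR : tR ≠ 0) :
    (tL * xm = tR * xp ∧ (dL * xm - aL) / tL = (dR * xp - aR) / tR) ↔
      xm = tR * xp / tL ∧ tR * xp * (dR / tR ^ 2 - dL / tL ^ 2) = aR / tR - aL / tL := by
  have hxm : tL * xm = tR * xp ↔ xm = tR * xp / tL := by
    rw [eq_div_iff hL, mul_comm]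
  rw [hxm, and_congr_right_iff]
  rintro rfl
  constructor <;> intro h
  · field_simp at h ⊢
    linear_combination -h
  · field_simp at h ⊢
    linear_combination -h

lemma signed_system_iff (hL : tL < 0) (hR : 0 < tR) :
    (xm < 0 ∧ 0 < xp ∧ tL * xm = tR * xp ∧ (dL * xm - aL) / tL = (dR * xp - aR) / tR) ↔
      xm = tR * xp / tL ∧ 0 < xp ∧ tR * xp * (dR / tR ^ 2 - dL / tL ^ 2) = aR / tR - aL / tL := by
  rw [system_iff_eq_div_and_mul_eq hL.ne hR.ne']
  constructor
  · rintro ⟨-, hxp, hxm, h⟩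
    exact ⟨hxm, hxp, h⟩
  · rintro ⟨rfl, hxp, h⟩
    exact ⟨div_neg_of_pos_of_neg (mul_pos hR hxp) hL, hxp, rfl, h⟩

lemma pos_and_mul_mul_eq_iff {t x δ α : ℝ} (ht : 0 < t) (hα : 0 < α) :
    (0 < x ∧ t * x * δ = α) ↔ 0 < δ ∧ x = α / (t * δ) := by
  constructor
  · rintro ⟨hx, rfl⟩
    have hδ : 0 < δ := pos_of_mul_pos_right hα (by positivity)
    exact ⟨hδ, by field_simp⟩
  · rintro ⟨hδ, rfl⟩
    exact ⟨by positivity, by field_simp⟩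

theorem stmt_12 (tR tL dR dL aR aL : ℝ) (hL : tL < 0) (hR : 0 < tR)
    (ha : aR / tR > aL / tL) :
    ((∃ xm xp : ℝ, xm < 0 ∧ 0 < xp ∧ tL * xm = tR * xp ∧
        (dL * xm - aL) / tL = (dR * xp - aR) / tR) ↔
      dR / tR ^ 2 > dL / tL ^ 2) ∧
    (dR / tR ^ 2 > dL / tL ^ 2 →
      ∃! s : ℝ × ℝ, s.1 < 0 ∧ 0 < s.2 ∧ tL * s.1 = tR * s.2 ∧
        (dL * s.1 - aL) / tL = (dR * s.2 - aR) / tR) := by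
  have hα : 0 < aR / tR - aL / tL := sub_pos.mpr ha
  have hδ : dR / tR ^ 2 > dL / tL ^ 2 ↔ 0 < dR / tR ^ 2 - dL / tL ^ 2 := sub_pos.symm
  simp_rw [signed_system_iff hL hR, pos_and_mul_mul_eq_iff hR hα, hδ]
  refine ⟨⟨fun ⟨_, _, _, hδ, _⟩ => hδ, fun hδ => ⟨_, _, rfl, hδ, rfl⟩⟩,
    fun hδ => ⟨(tR * _ / tL, _), ⟨rfl, hδ, rfl⟩, ?_⟩⟩
  rintro ⟨xm, xp⟩ ⟨hxm : xm = tR * xp / tL, -, hxp : xp = _⟩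
  subst hxm hxp
  rfl
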